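/- Let A = (Q, E, s, F) be a Wheeler r-GNFA, let ≤ be a Wheeler order on A, and let α ∈ Σ* with α ≠ ε. For 0 < k < min{r+1, |α|}, let f_k = out(Q[1, |G^≺(p(α, |α|−k))|], s(α, k)) and g_k = out(Q[1, |G^≺_⊣(p(α, |α|−k))|], s(α, k)). Let j° be the smallest integer 0 ≤ j ≤ |Q| such that in(Q[1, j], s(α, k)) ≥ g_k for every 0 < k < min{r+1, |α|} with g_k > f_k. If j° ≥ 1, then Q[j°] ∈ G_⊣(α). -/

import Mathlib

/-- Strict co-lexicographic order: `α ≺ β` iff `α.reverse` is lexicographically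
smaller than `β.reverse`. The empty string is the minimum. -/
def ColexLt {σ : Type*} [LinearOrder σ] (α β : List σ) : Prop :=
  List.Lex (· < ·) α.reverse β.reverse

/-- Non-strict co-lexicographic order `α ≼ β`. -/
def ColexLe {σ : Type*} [LinearOrder σ] (α β : List σ) : Prop :=
  ColexLt α β ∨ α = β

/-- `α` is a strict suffix of `β`. -/
def IsStrictSuffix {σ : Type*} (α β : List σ) : Prop :=
  α <:+ β ∧ α ≠ β

/-- `p(α, k)`: the prefix of `α` of length `k`. -/
def pref {σ : Type*} (α : List σ) (k : ℕ) : List σ := α.take k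

/-- `s(α, k)`: the suffix of `α` of length `k`. -/
def suff {σ : Type*} (α : List σ) (k : ℕ) : List σ := α.drop (α.length - k)

/-- The 1-based rank of a state in a finite linear order: `rankQ u = i` means
`u = Q[i]` in the enumeration `Q[1] < Q[2] < ⋯ < Q[|Q|]`. -/
noncomputable def rankQ {Q : Type*} [Fintype Q] [LinearOrder Q] (u : Q) : ℕ :=
  {v : Q | v ≤ u}.ncard

/-- `Q[i, j] = {Q[i], …, Q[j]}` (empty if `i > j`). -/
def Qiv (Q : Type*) [Fintype Q] [LinearOrder Q] (i j : ℕ) : Set Q :=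
  {u | i ≤ rankQ u ∧ rankQ u ≤ j}

/-- A generalized nondeterministic finite automaton: a finite set of
string-labeled edges `E ⊆ Q × Q × Σ*`, an initial state `s`, final states `F`. -/
structure GNFA (σ Q : Type*) where
  E : Finset (Q × Q × List σ)
  s : Q
  F : Finset Q

namespace GNFA

variable {σ Q : Type*}

/-- `I A u β` means `β ∈ I_u`: `β` is obtained by concatenating the edge labels
along some path from `s` to `u` (in particular `ε ∈ I_s`). -/
inductive I (A : GNFA σ Q) : Q → List σ → Prop
  | base : I A A.s []
  | step {u v : Q} {α ρ : List σ} : I A u α → (u, v, ρ) ∈ A.E → I A v (α ++ ρ)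

/-- Reachability along edges. -/
def Reach (A : GNFA σ Q) : Q → Q → Prop :=
  Relation.ReflTransGen (fun x y => ∃ ρ, (x, y, ρ) ∈ A.E)

/-- Every state is reachable from the initial state and is co-reachable
(final or allows reaching a final state). -/
def Standard (A : GNFA σ Q) : Prop :=
  (∀ u, A.Reach A.s u) ∧ ∀ u, ∃ f ∈ A.F, A.Reach u f

/-- An ε-walk from `u` to `v`: a (possibly empty) sequence of ε-labeled edges. -/
def EpsWalk (A : GNFA σ Q) : Q → Q → Prop :=
  Relation.ReflTransGen (fun x y => (x, y, ([] : List σ)) ∈ A.E)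

/-- An `r`-GNFA: all edge labels have length at most `r`. -/
def Bounded (A : GNFA σ Q) (r : ℕ) : Prop := ∀ e ∈ A.E, e.2.2.length ≤ r

/-- A GNFA without ε-transitions: every edge label is nonempty. -/
def NoEps (A : GNFA σ Q) : Prop := ∀ e ∈ A.E, e.2.2 ≠ []

/-- `λ(u)`: the set of strings labeling some edge entering `u`. -/
def lab (A : GNFA σ Q) (u : Q) : Set (List σ) := {ρ | ∃ u', (u', u, ρ) ∈ A.E}

/-- `G_⊣(α)`: states `u` such that some `β ∈ I_u` has `α` as a suffix. -/
def Gsuf (A : GNFA σ Q) (α : List σ) : Set Q := {u | ∃ β, I A u β ∧ α <:+ β}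

/-- `G*(α)`: states reached by an edge whose label has `α` as a suffix. -/
def Gstar (A : GNFA σ Q) (α : List σ) : Set Q := {u | ∃ ρ ∈ A.lab u, α <:+ ρ}

section Colex
variable [LinearOrder σ]

/-- The preorder `u ≼_A v`. -/
def Preceq (A : GNFA σ Q) (u v : Q) : Prop :=
  ∀ α β, I A u α → I A v β →
    ¬((I A u α ∧ I A v α) ∧ (I A u β ∧ I A v β)) → ColexLt α β

/-- `G^≺(α)`: states `u` such that every `β ∈ I_u` satisfies `β ≺ α`. -/
def Gprec (A : GNFA σ Q) (α : List σ) : Set Q := {u | ∀ β, I A u β → ColexLt β α}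

/-- `G^≺_⊣(α) = G^≺(α) ∪ G_⊣(α)`. -/
def GprecSuf (A : GNFA σ Q) (α : List σ) : Set Q := A.Gprec α ∪ A.Gsuf α

/-- The linear order on `Q` is a Wheeler order on `A` (Axioms 1–4). -/
def IsWheeler [LinearOrder Q] (A : GNFA σ Q) : Prop :=
  (∀ u v : Q, u ≤ v → A.Preceq u v) ∧
  (∀ u : Q, A.s ≤ u) ∧
  (∀ u' u v' v : Q, ∀ ρ ρ' : List σ, (u', u, ρ) ∈ A.E → (v', v, ρ') ∈ A.E →
      u < v → ¬IsStrictSuffix ρ' ρ → ColexLe ρ ρ') ∧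
  (∀ u' u v' v : Q, ∀ ρ : List σ, (u', u, ρ) ∈ A.E → (v', v, ρ) ∈ A.E →
      u < v → u' ≤ v')

end Colex

section Indexed
variable [Fintype Q] [LinearOrder Q]

/-- `out(Q[1, m], ρ)`: number of edges labeled `ρ` leaving states in `Q[1, m]`. -/
noncomputable def outC (A : GNFA σ Q) (m : ℕ) (ρ : List σ) : ℕ :=
  {e : Q × Q × List σ | e ∈ A.E ∧ rankQ e.1 ≤ m ∧ e.2.2 = ρ}.ncard

/-- `in(Q[1, m], ρ)`: number of edges labeled `ρ` entering states in `Q[1, m]`. -/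
noncomputable def inC (A : GNFA σ Q) (m : ℕ) (ρ : List σ) : ℕ :=
  {e : Q × Q × List σ | e ∈ A.E ∧ rankQ e.2.1 ≤ m ∧ e.2.2 = ρ}.ncard

/-- `A_max[i]`: the largest `j` such that there is an ε-walk from `Q[j]` to `Q[i]`. -/
noncomputable def Amax (A : GNFA σ Q) (i : ℕ) : ℕ :=
  sSup {j | ∃ u v : Q, rankQ u = i ∧ rankQ v = j ∧ A.EpsWalk v u}

/-- `A_min[i]`: the smallest `j` such that there is an ε-walk from `Q[j]` to `Q[i]`. -/
noncomputable def Amin (A : GNFA σ Q) (i : ℕ) : ℕ :=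
  sInf {j | ∃ u v : Q, rankQ u = i ∧ rankQ v = j ∧ A.EpsWalk v u}

variable [LinearOrder σ]

/-- `f_k = out(Q[1, |G^≺(p(α, |α|−k))|], s(α, k))`. -/
noncomputable def fk (A : GNFA σ Q) (α : List σ) (k : ℕ) : ℕ :=
  A.outC ((A.Gprec (pref α (α.length - k))).ncard) (suff α k)

/-- `g_k = out(Q[1, |G^≺_⊣(p(α, |α|−k))|], s(α, k))`. -/
noncomputable def gk (A : GNFA σ Q) (α : List σ) (k : ℕ) : ℕ :=
  A.outC ((A.GprecSuf (pref α (α.length - k))).ncard) (suff α k)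

/-- The property defining `j*` in Lemmas 2 and 4 (largest `j` satisfying it):
(i) `in(Q[1, j], s(α, k)) ≤ f_k` for every `0 < k < min{r+1, |α|}`; and
(ii) `ρ ≺ α` for every `ρ ∈ Σ^k ∩ λ(Q[h])`, every `1 ≤ h ≤ j`, every `0 < k < r+1`. -/
def Jcond (A : GNFA σ Q) (r : ℕ) (α : List σ) (j : ℕ) : Prop :=
  (∀ k, 0 < k → k < min (r + 1) α.length → A.inC j (suff α k) ≤ A.fk α k) ∧
  (∀ k, 0 < k → k < r + 1 → ∀ h, 1 ≤ h → h ≤ j → ∀ u : Q, rankQ u = h →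
      ∀ ρ : List σ, ρ.length = k → ρ ∈ A.lab u → ColexLt ρ α)

/-- The property defining `i*` (largest `i ≤ |Q|` satisfying it):
if `i ≥ 1` then `Q[i] ∈ G*(α)`. -/
def Icond (A : GNFA σ Q) (α : List σ) (i : ℕ) : Prop :=
  1 ≤ i → ∃ u : Q, rankQ u = i ∧ u ∈ A.Gstar α

/-- The property defining `j°` (smallest `j ≤ |Q|` satisfying it):
`in(Q[1, j], s(α, k)) ≥ g_k` for every `0 < k < min{r+1, |α|}` with `g_k > f_k`. -/
def Jcond2 (A : GNFA σ Q) (r : ℕ) (α : List σ) (j : ℕ) : Prop :=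
  ∀ k, 0 < k → k < min (r + 1) α.length → A.fk α k < A.gk α k →
    A.gk α k ≤ A.inC j (suff α k)

end Indexed

end GNFA

/-!
Since `j°` is minimal, the defining inequality fails at `j° - 1` for some `k`: with
`ρ = s(α, k)`, `f_k < g_k` and `in(Q[1, j° - 1], ρ) < g_k ≤ in(Q[1, j°], ρ)`. By Axiom 4, the
`ρ`-edges with source in a prefix `Q[1, m]` and those with target in a prefix `Q[1, j]` are
always nested, so counting yields a `ρ`-edge into `Q[j°]` whose source has rank in
`(|G^≺(p)|, |G^≺_⊣(p)|]`, where `p = p(α, |α| - k)`. By Axiom 1 both sets are initial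
segments of `Q`, so this source lies in `G_⊣(p)`, and following the edge puts `Q[j°]` in
`G_⊣(p ρ) = G_⊣(α)`.
-/

lemma List.lex_of_isPrefix_of_not_isPrefix {σ : Type*} [LinearOrder σ] :
    ∀ {q b g : List σ}, List.Lex (· < ·) b g → q <+: g → ¬ q <+: b →
      List.Lex (· < ·) b q
  | [], _, _, _, _, hn => absurd List.nil_prefix hn
  | _ :: _, [], _, _, _, _ => List.Lex.nil
  | x :: q, y :: b, _, hlex, hq, hn => by
      obtain ⟨t, rfl⟩ := hq
      cases hlex with
      | rel h => exact List.Lex.rel h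
      | cons h =>
          refine List.Lex.cons (lex_of_isPrefix_of_not_isPrefix h ⟨t, rfl⟩ ?_)
          rintro ⟨t', rfl⟩
          exact hn ⟨t', rfl⟩

section Colex

variable {σ : Type*} [LinearOrder σ] {β γ p : List σ}

lemma ColexLt.trans {δ : List σ} (h₁ : ColexLt β γ) (h₂ : ColexLt γ δ) : ColexLt β δ :=
  List.lex_trans (fun h h' => lt_trans h h') h₁ h₂

lemma ColexLt.of_isSuffix_of_not_isSuffix (h : ColexLt β γ) (hγ : p <:+ γ) (hβ : ¬ p <:+ β) :
    ColexLt β p :=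
  List.lex_of_isPrefix_of_not_isPrefix h (List.reverse_prefix.mpr hγ)
    (fun hp => hβ (List.reverse_prefix.mp hp))

end Colex

section Rank

variable {Q : Type*} [Fintype Q] [LinearOrder Q]

lemma rankQ_strictMono : StrictMono (rankQ : Q → ℕ) := fun _ _ h =>
  Set.ncard_lt_ncard (Set.Iic_ssubset_Iic.mpr h)

lemma rankQ_injective : Function.Injective (rankQ : Q → ℕ) := rankQ_strictMono.injective

lemma IsLowerSet.mem_iff_rankQ_le {D : Set Q} (hD : IsLowerSet D) {u : Q} :
    u ∈ D ↔ rankQ u ≤ D.ncard := by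
  refine ⟨fun hu => Set.ncard_le_ncard fun _ hv => hD hv hu, fun h => ?_⟩
  by_contra hu
  have hDu : D ⊆ Set.Iio u := fun d hd => lt_of_not_ge fun hud => hu (hD hud hd)
  have : D.ncard < rankQ u :=
    (Set.ncard_le_ncard hDu).trans_lt (Set.ncard_lt_ncard Set.Iio_ssubset_Iic_self)
  omega

end Rank

section Counting

variable {E : Type*} {X Y Z : Set E}

lemma Set.subset_of_ncard_le_of_total (hXY : X ⊆ Y ∨ Y ⊆ X) (h : X.ncard ≤ Y.ncard)
    (hX : X.Finite) : X ⊆ Y := by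
  rcases hXY with hXY | hYX
  · exact hXY
  · exact (Set.eq_of_subset_of_ncard_le hYX h hX).symm.subset

lemma Set.exists_mem_not_mem_of_ncard_lt_of_total (hXY : X ⊆ Y ∨ Y ⊆ X)
    (hX : X.ncard < Z.ncard) (hY : Y.ncard < Z.ncard) (hXf : X.Finite) (hYf : Y.Finite) :
    ∃ e ∈ Z, e ∉ X ∧ e ∉ Y := by
  by_contra! h
  have hZ : Z ⊆ X ∪ Y := fun e he => or_iff_not_imp_left.mpr (h e he)
  rcases hXY with hXY | hYX
  · rw [Set.union_eq_self_of_subset_left hXY] at hZ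
    exact (Set.ncard_le_ncard hZ hYf).not_gt hY
  · rw [Set.union_eq_self_of_subset_right hYX] at hZ
    exact (Set.ncard_le_ncard hZ hXf).not_gt hX

end Counting

namespace GNFA

variable {σ Q : Type*} {A : GNFA σ Q}

lemma Standard.exists_I (hA : A.Standard) (v : Q) : ∃ γ, A.I v γ := by
  induction hA.1 v with
  | refl => exact ⟨[], I.base⟩
  | tail _ hedge ih =>
      obtain ⟨ρ, he⟩ := hedge
      obtain ⟨γ, hγ⟩ := ih
      exact ⟨γ ++ ρ, hγ.step he⟩

lemma mem_gsuf_append {u v : Q} {p ρ : List σ} (hu : u ∈ A.Gsuf p) (he : (u, v, ρ) ∈ A.E) :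
    v ∈ A.Gsuf (p ++ ρ) := by
  obtain ⟨β, hβ, t, rfl⟩ := hu
  exact ⟨t ++ p ++ ρ, hβ.step he, t, (List.append_assoc _ _ _).symm⟩

section Wheeler

variable [LinearOrder σ] [LinearOrder Q]

lemma isLowerSet_gprec (hA : A.Standard) (hW : A.IsWheeler) (p : List σ) :
    IsLowerSet (A.Gprec p) := by
  intro v u huv hv β hβ
  by_cases hvβ : A.I v β
  · exact hv β hvβ
  · obtain ⟨γ, hγ⟩ := hA.exists_I v
    exact (hW.1 u v huv β γ hβ hγ fun h => hvβ h.1.2).trans (hv γ hγ)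

lemma isLowerSet_gprecSuf (hA : A.Standard) (hW : A.IsWheeler) (p : List σ) :
    IsLowerSet (A.GprecSuf p) := by
  intro v u huv hv
  by_cases hu : u ∈ A.Gsuf p
  · exact Or.inr hu
  rcases hv with hv | ⟨γ, hγ, hpγ⟩
  · exact Or.inl (isLowerSet_gprec hA hW p huv hv)
  · refine Or.inl fun β hβ => ?_
    have hβγ : ColexLt β γ := hW.1 u v huv β γ hβ hγ fun h => hu ⟨γ, h.2.1, hpγ⟩
    exact hβγ.of_isSuffix_of_not_isSuffix hpγ fun hpβ => hu ⟨β, hβ, hpβ⟩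

end Wheeler

section Counting

variable [Fintype Q] [LinearOrder Q]

/-- `A.outC m ρ` and `A.inC j ρ` are by definition the cardinalities of `outEdges`
and `inEdges`. -/
def outEdges (A : GNFA σ Q) (m : ℕ) (ρ : List σ) : Set (Q × Q × List σ) :=
  {e | e ∈ A.E ∧ rankQ e.1 ≤ m ∧ e.2.2 = ρ}

def inEdges (A : GNFA σ Q) (j : ℕ) (ρ : List σ) : Set (Q × Q × List σ) :=
  {e | e ∈ A.E ∧ rankQ e.2.1 ≤ j ∧ e.2.2 = ρ}

lemma outEdges_finite (m : ℕ) (ρ : List σ) : (A.outEdges m ρ).Finite :=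
  A.E.finite_toSet.subset fun _ he => he.1

lemma inEdges_finite (j : ℕ) (ρ : List σ) : (A.inEdges j ρ).Finite :=
  A.E.finite_toSet.subset fun _ he => he.1

/-- Axiom 4: among `ρ`-edges, a smaller target forces a smaller (or equal) source. -/
lemma outEdges_subset_or_inEdges_subset [LinearOrder σ] (hW : A.IsWheeler) (m j : ℕ)
    (ρ : List σ) : A.outEdges m ρ ⊆ A.inEdges j ρ ∨ A.inEdges j ρ ⊆ A.outEdges m ρ := by
  by_contra! h
  obtain ⟨⟨u', u, _⟩, ⟨he, hu' : rankQ u' ≤ m, rfl⟩, hu⟩ := Set.not_subset.mp h.1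
  obtain ⟨⟨v', v, _⟩, ⟨he', hv : rankQ v ≤ j, rfl⟩, hv'⟩ := Set.not_subset.mp h.2
  have huj : j < rankQ u := lt_of_not_ge fun h => hu ⟨he, h, rfl⟩
  have hvm : m < rankQ v' := lt_of_not_ge fun h => hv' ⟨he', h, rfl⟩
  have hvu : v < u := rankQ_strictMono.lt_iff_lt.mp (by omega)
  have hvu' : rankQ v' ≤ rankQ u' := rankQ_strictMono.monotone (hW.2.2.2 _ _ _ _ _ he' he hvu)
  omega

lemma exists_edge_of_outC_lt [LinearOrder σ] (hW : A.IsWheeler) {ρ : List σ} {mf mg j : ℕ}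
    (hf : A.outC mf ρ < A.outC mg ρ) (hin : A.inC (j - 1) ρ < A.outC mg ρ)
    (hg : A.outC mg ρ ≤ A.inC j ρ) :
    ∃ u' v, (u', v, ρ) ∈ A.E ∧ mf < rankQ u' ∧ rankQ u' ≤ mg ∧ rankQ v = j := by
  have hsub : A.outEdges mg ρ ⊆ A.inEdges j ρ :=
    Set.subset_of_ncard_le_of_total (outEdges_subset_or_inEdges_subset hW mg j ρ) hg
      (outEdges_finite mg ρ)
  obtain ⟨⟨u', v, _⟩, ⟨he, hmg : rankQ u' ≤ mg, rfl⟩, hmf, hj⟩ :=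
    Set.exists_mem_not_mem_of_ncard_lt_of_total
      (outEdges_subset_or_inEdges_subset hW mf (j - 1) ρ) hf hin
      (outEdges_finite mf ρ) (inEdges_finite (j - 1) ρ)
  have hvj : rankQ v ≤ j := (hsub ⟨he, hmg, rfl⟩).2.1
  refine ⟨u', v, he, lt_of_not_ge fun h => hmf ⟨he, h, rfl⟩, hmg, ?_⟩
  by_contra hne
  exact hj ⟨he, (by omega : rankQ v ≤ j - 1), rfl⟩

end Counting

lemma mem_gsuf_of_rankQ [LinearOrder σ] [Fintype Q] [LinearOrder Q] (hA : A.Standard)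
    (hW : A.IsWheeler) {p : List σ} {u : Q} (hf : (A.Gprec p).ncard < rankQ u)
    (hg : rankQ u ≤ (A.GprecSuf p).ncard) : u ∈ A.Gsuf p :=
  ((isLowerSet_gprecSuf hA hW p).mem_iff_rankQ_le.mpr hg).resolve_left fun h =>
    hf.not_ge ((isLowerSet_gprec hA hW p).mem_iff_rankQ_le.mp h)

end GNFA

theorem jo_mem_gsuf_general {σ Q : Type*} [LinearOrder σ]
    [Fintype Q] [LinearOrder Q] (A : GNFA σ Q)
    (hA : A.Standard) (hW : A.IsWheeler) (r : ℕ)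
    (α : List σ)
    (jo : ℕ) (hjo_le : jo ≤ Fintype.card Q) (hjo : A.Jcond2 r α jo)
    (hjo_min : ∀ j ≤ Fintype.card Q, A.Jcond2 r α j → jo ≤ j)
    (h1 : 1 ≤ jo) :
    ∀ u : Q, rankQ u = jo → u ∈ A.Gsuf α := by
  intro u hu
  obtain ⟨k, hk0, hk, hfg, hin⟩ : ∃ k, 0 < k ∧ k < min (r + 1) α.length ∧
      A.fk α k < A.gk α k ∧ A.inC (jo - 1) (suff α k) < A.gk α k := by
    by_contra! h
    exact (hjo_min (jo - 1) (by omega) h).not_gt (by omega)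
  obtain ⟨u', v, he, hf, hg, hv⟩ := A.exists_edge_of_outC_lt hW hfg hin (hjo k hk0 hk hfg)
  obtain rfl : v = u := rankQ_injective (hv.trans hu.symm)
  have hmem := GNFA.mem_gsuf_append (GNFA.mem_gsuf_of_rankQ hA hW hf hg) he
  rwa [pref, suff, List.take_append_drop] at hmem

/-- Let `A` be a Wheeler `r`-GNFA with Wheeler order `≤` and
`α ≠ ε`. Let `j°` be the smallest `0 ≤ j ≤ |Q|` such that
`in(Q[1,j], s(α,k)) ≥ g_k` for every `0 < k < min{r+1,|α|}` with `g_k > f_k`.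
If `j° ≥ 1`, then `Q[j°] ∈ G_⊣(α)`. -/
theorem jo_mem_gsuf {σ Q : Type*} [Fintype σ] [LinearOrder σ]
    [Fintype Q] [LinearOrder Q] (A : GNFA σ Q)
    (hA : A.Standard) (hW : A.IsWheeler) (r : ℕ) (hr : A.Bounded r)
    (α : List σ) (hα : α ≠ [])
    (jo : ℕ) (hjo_le : jo ≤ Fintype.card Q) (hjo : A.Jcond2 r α jo)
    (hjo_min : ∀ j ≤ Fintype.card Q, A.Jcond2 r α j → jo ≤ j)
    (h1 : 1 ≤ jo) :
    ∀ u : Q, rankQ u = jo → u ∈ A.Gsuf α :=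
  jo_mem_gsuf_general A hA hW r α jo hjo_le hjo hjo_min h1
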